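/- arXiv:2003.03896 — 3 statements merged into one kernel-verified Lean document; each statement's English description precedes it below -/
import Mathlib

section
/- For every partition γ with γ₁ ≤ ℓ(γ) + 2, the successor map ν satisfies dinv(ν(γ)) = dinv(γ) + 1 and defc(ν(γ)) = defc(γ). -/
/-!
Write `f i = γᵢ + i` and `g j = γ'ⱼ + j`; the cell `(i, j)` counts for dinv iff `f i - g j ∈ {0, 1}`.
When `γ₁ ≤ ℓ + 2` the first row of `ν(γ)` is its longest and `ν(γ)'ⱼ = γ'ⱼ₊₁ + 1` for `j ≤ ℓ`, so
the shift `(i + 1, j) ↦ (i, j + 1)` matches the cells of `ν(γ)` off its first row with the cells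
of `γ` off its first column and preserves `f i - g j`. It remains to compare the first row of
`ν(γ)` with the first column of `γ`: they count the indices at which `g (· + 1)`, resp. `f`,
lies in the window `[ℓ, ℓ + 2)`. Reflecting antidiagonals gives
`#{i < t | t ≤ f i} = #{k < t | t ≤ g k}` for every `t`, hence equal window counts for `f` and
`g` over `[0, ℓ + 2)`; the first row of `ν(γ)` misses only `k = 0` of the window of `g`, the
first column of `γ` misses `i = ℓ, ℓ + 1` of the window of `f`. Finally `|ν(γ)| = |γ| + 1`.
-/

/-- The `i`-th part (0-indexed) of a partition given as a list, with 0 padding. -/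
def parts (γ : List ℕ) (i : ℕ) : ℕ := γ.getD i 0

/-- The number of cells in the (0-indexed) `j`-th column of the diagram. -/
def conj (γ : List ℕ) (j : ℕ) : ℕ :=
  (List.range γ.length).countP (fun i => decide (j < parts γ i))

/-- The cells of the diagram of `γ`, 0-indexed. -/
def cells (γ : List ℕ) : Finset (ℕ × ℕ) :=
  (Finset.range γ.length ×ˢ Finset.range (γ.sum + 1)).filter (fun c => c.2 < parts γ c.1)

/-- The diagonal inversion count: cells with arm − leg ∈ {0,1}. -/
def dinv (γ : List ℕ) : ℕ :=
  ((cells γ).filter (fun c =>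
    (parts γ c.1 : ℤ) - 1 - c.2 = (conj γ c.2 : ℤ) - 1 - c.1 ∨
    (parts γ c.1 : ℤ) - 1 - c.2 = (conj γ c.2 : ℤ) - 1 - c.1 + 1)).card

/-- Minimum triangle size: least `n` with `γᵢ ≤ n − i` for all `i`. -/
noncomputable def mind (γ : List ℕ) : ℕ := sInf {n : ℕ | ∀ i < γ.length, parts γ i + i + 1 ≤ n}

/-- A list of naturals represents a partition if weakly decreasing with positive parts. -/
def IsPartition (γ : List ℕ) : Prop := List.Pairwise (· ≥ ·) γ ∧ ∀ x ∈ γ, 0 < x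

/-- The successor map `ν`: prepend a part `ℓ(γ)+1`, decrement all old parts,
and delete the resulting zero parts. Meaningful when `γ₁ ≤ ℓ(γ) + 2`. -/
def nu (γ : List ℕ) : List ℕ :=
  ((γ.length + 1) :: γ.map (fun x => x - 1)).filter (fun x => x ≠ 0)

open Finset Nat

lemma Nat.count_congr {p q : ℕ → Prop} [DecidablePred p] [DecidablePred q] {n : ℕ}
    (h : ∀ k < n, p k ↔ q k) : count p n = count q n :=
  (count_mono_left fun k hk => (h k hk).1).antisymm (count_mono_left fun k hk => (h k hk).2)

lemma Nat.lt_count_iff_of_downward_closed {p : ℕ → Prop} [DecidablePred p] {n i : ℕ}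
    (hp : ∀ ⦃j k⦄, j ≤ k → p k → p j) (hn : ∀ k, p k → k < n) : i < count p n ↔ p i := by
  refine ⟨fun hi => ?_, fun hi => ?_⟩
  · by_contra hpi
    obtain ⟨d, rfl⟩ : ∃ d, n = i + d := ⟨n - i, by have := count_le (p := p) (n := n); omega⟩
    rw [count_add, count_of_forall_not fun k _ hk => hpi (hp (Nat.le_add_right i k) hk)] at hi
    have := count_le (p := p) (n := i)
    omega
  · calc i < count p (i + 1) := by rw [count_of_forall fun k hk => hp (by omega) hi]; omega
      _ ≤ count p n := count_monotone p (hn i hi)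

lemma count_window_add_count_le (f : ℕ → ℕ) (hf : ∀ i, i ≤ f i) (a d : ℕ) :
    count (fun i => a ≤ f i ∧ f i < a + d) (a + d) + count (fun i => a + d ≤ f i) (a + d)
      = count (fun i => a ≤ f i) a + d := by
  simp only [count_eq_card_filter_range, card_filter]
  rw [← sum_add_distrib, sum_range_add]
  congr 1
  · exact sum_congr rfl fun i _ => by split_ifs <;> omega
  · calc _ = ∑ _k ∈ range d, 1 := sum_congr rfl fun k _ => by have := hf (a + k); split_ifs <;> omega
      _ = d := by simp

section Diagram

variable {γ : List ℕ}

lemma parts_of_length_le {i : ℕ} (h : γ.length ≤ i) : parts γ i = 0 :=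
  List.getD_eq_default _ _ h

lemma lt_length_of_parts_pos {i : ℕ} (h : 0 < parts γ i) : i < γ.length := by
  by_contra hi
  rw [parts_of_length_le (not_lt.1 hi)] at h
  omega

lemma parts_pos (hpos : ∀ x ∈ γ, 0 < x) {i : ℕ} (h : i < γ.length) : 0 < parts γ i := by
  rw [parts, List.getD_eq_getElem _ _ h]
  exact hpos _ (List.getElem_mem h)

lemma parts_le_sum (γ : List ℕ) (i : ℕ) : parts γ i ≤ γ.sum := by
  rcases lt_or_ge i γ.length with h | h
  · rw [parts, List.getD_eq_getElem _ _ h]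
    exact List.le_sum_of_mem (List.getElem_mem h)
  · simp [parts_of_length_le h]

lemma parts_zero (γ : List ℕ) : parts γ 0 = γ.headD 0 := by
  cases γ <;> rfl

lemma parts_antitone (hs : γ.Pairwise (· ≥ ·)) : Antitone (parts γ) := by
  intro i j hij
  rcases lt_or_ge j γ.length with hj | hj
  · rw [parts, parts, List.getD_eq_getElem _ _ hj, List.getD_eq_getElem _ _ (hij.trans_lt hj)]
    rcases hij.eq_or_lt with rfl | hlt
    · rfl
    · exact List.pairwise_iff_getElem.1 hs i j _ hj hlt
  · simp [parts_of_length_le hj]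

lemma mem_cells {c : ℕ × ℕ} : c ∈ cells γ ↔ c.2 < parts γ c.1 := by
  refine ⟨fun h => (mem_filter.1 h).2, fun h => mem_filter.2 ⟨mem_product.2 ⟨?_, ?_⟩, h⟩⟩
  · by_contra hc
    rw [parts_of_length_le (not_lt.1 (mt mem_range.2 hc))] at h
    omega
  · exact mem_range.2 (Nat.lt_succ_of_lt (h.trans_le (parts_le_sum γ c.1)))

lemma conj_eq_count (γ : List ℕ) (j : ℕ) : conj γ j = count (fun i => j < parts γ i) γ.length :=
  rfl

lemma lt_conj_iff (h : Antitone (parts γ)) {i j : ℕ} : i < conj γ j ↔ j < parts γ i := by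
  rw [conj_eq_count]
  exact lt_count_iff_of_downward_closed (fun k l hkl hl => hl.trans_le (h hkl))
    fun k hk => lt_length_of_parts_pos (by omega)

lemma conj_zero (hs : γ.Pairwise (· ≥ ·)) (hpos : ∀ x ∈ γ, 0 < x) : conj γ 0 = γ.length :=
  eq_of_forall_lt_iff fun i => by
    rw [lt_conj_iff (parts_antitone hs)]
    exact ⟨lt_length_of_parts_pos, parts_pos hpos⟩

lemma count_le_parts_add_eq_count_le_conj_add (h : Antitone (parts γ)) (t : ℕ) :
    count (fun i => t ≤ parts γ i + i) t = count (fun k => t ≤ conj γ k + k) t := by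
  simp only [count_eq_card_filter_range, card_filter]
  rw [← sum_range_reflect]
  refine sum_congr rfl fun k hk => if_congr ?_ rfl rfl
  have := mem_range.1 hk
  calc t ≤ parts γ (t - 1 - k) + (t - 1 - k) ↔ k < parts γ (t - 1 - k) := by omega
    _ ↔ t - 1 - k < conj γ k := (lt_conj_iff h).symm
    _ ↔ t ≤ conj γ k + k := by omega

lemma count_parts_window_eq_count_conj_window (h : Antitone (parts γ)) (a d : ℕ) :
    count (fun i => a ≤ parts γ i + i ∧ parts γ i + i < a + d) (a + d)
      = count (fun k => a ≤ conj γ k + k ∧ conj γ k + k < a + d) (a + d) := by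
  have hp := count_window_add_count_le (fun i => parts γ i + i) (fun i => by omega) a d
  have hc := count_window_add_count_le (fun k => conj γ k + k) (fun k => by omega) a d
  rw [count_le_parts_add_eq_count_le_conj_add h a,
    count_le_parts_add_eq_count_le_conj_add h (a + d)] at hp
  omega

end Diagram

lemma List.sum_filter_ne_zero (l : List ℕ) : (l.filter (· ≠ 0)).sum = l.sum := by
  induction l with
  | nil => rfl
  | cons a t ih =>
    rw [List.filter_cons]
    split_ifs <;> simp_all

lemma List.sum_map_pred_add_length {l : List ℕ} (hpos : ∀ x ∈ l, 0 < x) :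
    (l.map (· - 1)).sum + l.length = l.sum := by
  induction l with
  | nil => rfl
  | cons a t ih =>
    have := hpos a List.mem_cons_self
    have := ih fun x hx => hpos x (List.mem_cons_of_mem a hx)
    simp only [List.map_cons, List.sum_cons, List.length_cons]
    omega

lemma List.getD_filter_ne_zero {l : List ℕ} (hl : l.Pairwise (· ≥ ·)) (i : ℕ) :
    (l.filter (· ≠ 0)).getD i 0 = l.getD i 0 := by
  induction l generalizing i with
  | nil => rfl
  | cons a t ih =>
    obtain ⟨ha, ht⟩ := List.pairwise_cons.1 hl
    by_cases h0 : a = 0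
    · subst h0
      have hzero : ∀ x ∈ (0 :: t : List ℕ), x = 0 := by
        simpa using fun x hx => Nat.le_zero.1 (ha x hx)
      rw [List.filter_eq_nil_iff.2 (by simpa using hzero), List.eq_replicate_of_mem hzero,
        List.getD_nil, List.getD_eq_getElem?_getD, List.getElem?_getD_replicate_default_eq]
    · rw [List.filter_cons_of_pos (by simpa using h0)]
      cases i with
      | zero => rfl
      | succ n => simpa using ih ht n

section Successor

variable {γ : List ℕ}

lemma nu_eq_cons (γ : List ℕ) :
    nu γ = (γ.length + 1) :: (γ.map (· - 1)).filter (· ≠ 0) := by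
  rw [nu, List.filter_cons_of_pos (by simp)]

lemma parts_nu_zero (γ : List ℕ) : parts (nu γ) 0 = γ.length + 1 := by
  rw [nu_eq_cons]; rfl

lemma parts_nu_succ (hs : γ.Pairwise (· ≥ ·)) (i : ℕ) : parts (nu γ) (i + 1) = parts γ i - 1 := by
  rw [nu_eq_cons]
  show ((γ.map (· - 1)).filter (· ≠ 0)).getD i 0 = _
  rw [List.getD_filter_ne_zero (hs.map (· - 1) fun a b hab => Nat.sub_le_sub_right hab 1)]
  exact List.getD_map (d := 0) _ (· - 1)

lemma sum_nu (hpos : ∀ x ∈ γ, 0 < x) : (nu γ).sum = γ.sum + 1 := by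
  rw [nu, List.sum_filter_ne_zero, List.sum_cons, ← List.sum_map_pred_add_length hpos]
  omega

lemma parts_le_length_add_two (hs : γ.Pairwise (· ≥ ·)) (hdom : γ.headD 0 ≤ γ.length + 2)
    (i : ℕ) : parts γ i ≤ γ.length + 2 :=
  (parts_antitone hs (Nat.zero_le i)).trans ((parts_zero γ).trans_le hdom)

lemma parts_nu_antitone (hs : γ.Pairwise (· ≥ ·)) (hdom : γ.headD 0 ≤ γ.length + 2) :
    Antitone (parts (nu γ)) := by
  intro i j hij
  rcases i with _ | i <;> rcases j with _ | j
  · rfl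
  · rw [parts_nu_zero, parts_nu_succ hs]; have := parts_le_length_add_two hs hdom j; omega
  · omega
  · rw [parts_nu_succ hs, parts_nu_succ hs]
    exact Nat.sub_le_sub_right (parts_antitone hs (by omega)) 1

lemma conj_nu (hs : γ.Pairwise (· ≥ ·)) (hdom : γ.headD 0 ≤ γ.length + 2) {j : ℕ}
    (hj : j ≤ γ.length) : conj (nu γ) j = conj γ (j + 1) + 1 :=
  eq_of_forall_lt_iff fun i => by
    rw [lt_conj_iff (parts_nu_antitone hs hdom)]
    rcases i with _ | i
    · rw [parts_nu_zero]; omega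
    · rw [parts_nu_succ hs, add_lt_add_iff_right, lt_conj_iff (parts_antitone hs)]; omega

end Successor

section Dinv

variable {γ : List ℕ}

def IsDinvCell (γ : List ℕ) (c : ℕ × ℕ) : Prop :=
  parts γ c.1 + c.1 = conj γ c.2 + c.2 ∨ parts γ c.1 + c.1 = conj γ c.2 + c.2 + 1

instance (γ : List ℕ) : DecidablePred (IsDinvCell γ) := fun _ => instDecidableOr

def dinvCells (γ : List ℕ) : Finset (ℕ × ℕ) := (cells γ).filter (IsDinvCell γ)

lemma dinv_eq_card_dinvCells (γ : List ℕ) : dinv γ = #(dinvCells γ) := by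
  unfold dinv dinvCells IsDinvCell
  congr 1
  exact filter_congr fun c _ => by omega

lemma mem_dinvCells {c : ℕ × ℕ} : c ∈ dinvCells γ ↔ c.2 < parts γ c.1 ∧ IsDinvCell γ c := by
  rw [dinvCells, mem_filter, mem_cells]

lemma card_filter_cells_fst_eq_zero (γ : List ℕ) (p : ℕ × ℕ → Prop) [DecidablePred p] :
    #{c ∈ cells γ | p c ∧ c.1 = 0} = count (fun j => p (0, j)) (parts γ 0) := by
  rw [count_eq_card_filter_range]
  refine card_nbij' Prod.snd (fun j => (0, j)) ?_ ?_ ?_ ?_ <;>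
    simp +contextual [Set.MapsTo, Set.LeftInvOn, mem_cells]
  rintro _ j hj hp rfl
  exact ⟨hj, hp⟩

lemma card_filter_cells_snd_eq_zero (hpos : ∀ x ∈ γ, 0 < x) (p : ℕ × ℕ → Prop) [DecidablePred p] :
    #{c ∈ cells γ | p c ∧ c.2 = 0} = count (fun i => p (i, 0)) γ.length := by
  rw [count_eq_card_filter_range]
  refine card_nbij' Prod.fst (fun i => (i, 0)) ?_ ?_ ?_ ?_ <;>
    simp +contextual [Set.MapsTo, Set.LeftInvOn, mem_cells, parts_pos hpos]
  rintro i _ hj hp rfl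
  exact ⟨lt_length_of_parts_pos hj, hp⟩

end Dinv

section DinvSuccessor

variable {γ : List ℕ}

lemma isDinvCell_nu_succ (hs : γ.Pairwise (· ≥ ·)) (hdom : γ.headD 0 ≤ γ.length + 2) {i j : ℕ}
    (hij : j + 1 < parts γ i) : IsDinvCell (nu γ) (i + 1, j) ↔ IsDinvCell γ (i, j + 1) := by
  have := parts_le_length_add_two hs hdom i
  simp only [IsDinvCell]
  rw [parts_nu_succ hs, conj_nu hs hdom (by omega)]
  omega

lemma mem_dinvCells_nu_succ (hs : γ.Pairwise (· ≥ ·)) (hdom : γ.headD 0 ≤ γ.length + 2)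
    {i j : ℕ} : (i + 1, j) ∈ dinvCells (nu γ) ↔ (i, j + 1) ∈ dinvCells γ := by
  simp only [mem_dinvCells, parts_nu_succ hs]
  rw [show j < parts γ i - 1 ↔ j + 1 < parts γ i by omega]
  exact and_congr_right (isDinvCell_nu_succ hs hdom)

lemma card_dinvCells_nu_filter_fst_ne_zero (hs : γ.Pairwise (· ≥ ·))
    (hdom : γ.headD 0 ≤ γ.length + 2) :
    #{c ∈ dinvCells (nu γ) | c.1 ≠ 0} = #{c ∈ dinvCells γ | c.2 ≠ 0} := by
  refine card_nbij' (fun c => (c.1 - 1, c.2 + 1)) (fun c => (c.1 + 1, c.2 - 1)) ?_ ?_ ?_ ?_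
  · rintro ⟨_ | i, j⟩ hc <;> simp only [coe_filter, Set.mem_ofPred_eq] at hc ⊢
    · exact absurd rfl hc.2
    · exact ⟨(mem_dinvCells_nu_succ hs hdom).1 hc.1, by omega⟩
  · rintro ⟨i, _ | j⟩ hc <;> simp only [coe_filter, Set.mem_ofPred_eq] at hc ⊢
    · exact absurd rfl hc.2
    · exact ⟨(mem_dinvCells_nu_succ hs hdom).2 hc.1, by omega⟩
  · rintro ⟨_ | i, j⟩ hc
    · simp at hc
    · rfl
  · rintro ⟨i, _ | j⟩ hc
    · simp at hc
    · rfl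

lemma isDinvCell_nu_zero_left (hs : γ.Pairwise (· ≥ ·)) (hdom : γ.headD 0 ≤ γ.length + 2)
    {j : ℕ} (hj : j ≤ γ.length) : IsDinvCell (nu γ) (0, j) ↔
      γ.length ≤ conj γ (j + 1) + (j + 1) ∧ conj γ (j + 1) + (j + 1) < γ.length + 2 := by
  simp only [IsDinvCell]
  rw [parts_nu_zero, conj_nu hs hdom hj]
  omega

lemma isDinvCell_zero_right (hs : γ.Pairwise (· ≥ ·)) (hpos : ∀ x ∈ γ, 0 < x) {i : ℕ} :
    IsDinvCell γ (i, 0) ↔ γ.length ≤ parts γ i + i ∧ parts γ i + i < γ.length + 2 := by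
  simp only [IsDinvCell]
  rw [conj_zero hs hpos]
  omega

lemma card_dinvCells_nu_filter_fst_eq_zero (hs : γ.Pairwise (· ≥ ·)) (hpos : ∀ x ∈ γ, 0 < x)
    (hdom : γ.headD 0 ≤ γ.length + 2) :
    #{c ∈ dinvCells (nu γ) | c.1 = 0} = #{c ∈ dinvCells γ | c.2 = 0} + 1 := by
  rw [dinvCells, dinvCells, filter_filter, filter_filter, card_filter_cells_fst_eq_zero,
    card_filter_cells_snd_eq_zero hpos, parts_nu_zero,
    count_congr fun j hj => isDinvCell_nu_zero_left hs hdom (by omega)]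
  simp only [isDinvCell_zero_right hs hpos]
  have hwin := count_parts_window_eq_count_conj_window (parts_antitone hs) γ.length 2
  have hL : parts γ γ.length = 0 := parts_of_length_le le_rfl
  have hL1 : parts γ (γ.length + 1) = 0 := parts_of_length_le (by omega)
  have h0 := conj_zero hs hpos
  rw [count_succ, count_succ, count_succ', if_pos, if_pos, if_pos] at hwin <;> omega

end DinvSuccessor

theorem stmt5 (γ : List ℕ) (hγ : IsPartition γ) (hdom : γ.headD 0 ≤ γ.length + 2) :
    dinv (nu γ) = dinv γ + 1 ∧
    ((nu γ).sum : ℤ) - dinv (nu γ) = (γ.sum : ℤ) - dinv γ := by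
  obtain ⟨hs, hpos⟩ := hγ
  have hdinv : dinv (nu γ) = dinv γ + 1 := by
    rw [dinv_eq_card_dinvCells, dinv_eq_card_dinvCells,
      ← card_filter_add_card_filter_not (s := dinvCells (nu γ)) (fun c => c.1 = 0),
      ← card_filter_add_card_filter_not (s := dinvCells γ) (fun c => c.2 = 0),
      card_dinvCells_nu_filter_fst_eq_zero hs hpos hdom,
      card_dinvCells_nu_filter_fst_ne_zero hs hdom]
    ring
  refine ⟨hdinv, ?_⟩
  rw [sum_nu hpos, hdinv]
  push_cast
  ring
end

section
/- Let F_j be the infinite (a_j, m_j, h_j)-staircase for 1 ≤ j ≤ s, and let F be their pointwise minimum (with domain the union of the domains, taking min over those F_j defined at each point). Then for every integer n ≥ 0, {i : F(i) ≤ n} = ⋃_{j : n ≥ h_j} [a_j, a_j + m_j + C(n,2) − C(h_j,2)]. -/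
/-- `C2 n = n(n−1)/2`. -/
def C2 (n : ℤ) : ℤ := n * (n - 1) / 2

/-- The infinite `(a,m,h)`-staircase, intended for arguments `i ≥ a`:
the weakly increasing function whose values are `m+1` copies of `h` followed by,
for each `p ≥ 1`, `h+p−1` copies of `h+p`.  Equivalently, `staircase a m h i` is
the least `n ≥ h` with `i ≤ a + m + C2 n − C2 h`. -/
noncomputable def staircase (a m h i : ℤ) : ℤ :=
  sInf {n : ℤ | h ≤ n ∧ i ≤ a + m + C2 n - C2 h}

/-! The staircase is the generalized inverse of `n ↦ a + m + C2 n − C2 h`, which is monotone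
on `n ≥ h ≥ 0` and unbounded; so `staircase a m h i ≤ n` holds exactly when `h ≤ n` and `i`
lies below that bound, and the theorem is this equivalence read off for each `j`. -/

lemma Int.mul_sub_one_nonneg (z : ℤ) : 0 ≤ z * (z - 1) := by
  rcases le_or_gt z 0 with hz | hz <;> nlinarith

lemma sub_one_le_C2 (n : ℤ) : n - 1 ≤ C2 n := by
  rw [C2, Int.le_ediv_iff_mul_le two_pos]
  nlinarith [Int.mul_sub_one_nonneg (n - 1)]

lemma C2_monotoneOn : MonotoneOn C2 (Set.Ici 0) := by
  intro x (hx : 0 ≤ x) y _ hxy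
  refine Int.ediv_le_ediv two_pos ?_
  rcases hx.eq_or_lt with rfl | hx
  · simpa using Int.mul_sub_one_nonneg y
  · nlinarith

lemma staircase_le_iff {a m h : ℤ} (hh : 0 ≤ h) (i n : ℤ) :
    staircase a m h i ≤ n ↔ h ≤ n ∧ i ≤ a + m + C2 n - C2 h := by
  set S := {n : ℤ | h ≤ n ∧ i ≤ a + m + C2 n - C2 h}
  have hbdd : BddBelow S := ⟨h, fun _ hx => hx.1⟩
  have hne : S.Nonempty := by
    set k := max h (i - a - m + C2 h + 1)
    refine ⟨k, le_max_left _ _, ?_⟩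
    linarith [sub_one_le_C2 k, le_max_right h (i - a - m + C2 h + 1)]
  refine ⟨fun hle => ?_, fun hn => csInf_le hbdd hn⟩
  obtain ⟨hhk, hik⟩ := Int.csInf_mem hne hbdd
  have := C2_monotoneOn (hh.trans hhk) (hh.trans (hhk.trans hle)) hle
  exact ⟨hhk.trans hle, by linarith⟩

theorem stmt10_general (s : ℕ) (a m h : Fin s → ℤ) (hh : ∀ j, 0 ≤ h j)
    (n : ℤ) :
    -- "F(i) ≤ n" for the pointwise minimum F: some Fⱼ is defined at i and has value ≤ n
    {i : ℤ | ∃ j, a j ≤ i ∧ staircase (a j) (m j) (h j) i ≤ n} =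
      ⋃ j ∈ {j | h j ≤ n}, Set.Icc (a j) (a j + m j + C2 n - C2 (h j)) := by
  ext i
  simp only [Set.mem_ofPred_eq, Set.mem_iUnion, Set.mem_Icc, exists_prop,
    staircase_le_iff (hh _)]
  grind

theorem stmt10 (s : ℕ) (a m h : Fin s → ℤ) (hm : ∀ j, 0 ≤ m j) (hh : ∀ j, 0 ≤ h j)
    (n : ℤ) (hn : 0 ≤ n) :
    -- "F(i) ≤ n" for the pointwise minimum F: some Fⱼ is defined at i and has value ≤ n
    {i : ℤ | ∃ j, a j ≤ i ∧ staircase (a j) (m j) (h j) i ≤ n} =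
      ⋃ j ∈ {j | h j ≤ n}, Set.Icc (a j) (a j + m j + C2 n - C2 (h j)) :=
  stmt10_general s a m h hh n
end

section
/- Let γ be a partition with dinv(γ) = a, mind(γ) = n, and let m ≥ 0 be the least integer such that the (m+1)-th column of γ has exactly n − m − 1 cells. Let I be the set of i ≥ 0 such that ν^i(γ) is defined. Then the function F on {a + i : i ∈ I} given by F(a+i) = mind(ν^i(γ)) is an (a,m,n)-staircase (a restriction of the infinite (a,m,n)-staircase to an initial segment of its domain, possibly all of it). -/
/-- `nuIter i γ = some δ` iff the `i`-th iterate `ν^i(γ)` is defined and equals `δ`. -/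
def nuIter : ℕ → List ℕ → Option (List ℕ)
  | 0, γ => some γ
  | i + 1, γ => if γ.headD 0 ≤ γ.length + 2 then nuIter i (nu γ) else none

/-! For a partition, `mind γ ≤ n` iff every nonempty column `j` has `γ'ⱼ + j + 1 ≤ n`. The map `ν`
shifts the columns one step left and adds a cell to each of the columns `0, …, ℓ(γ)`, so
`mind (ν γ) = max (ℓ(γ) + 2) (mind γ)`. Consequently, if the first column `m` with
`γ'ₘ + m + 1 = mind γ` has `m > 0`, then `ν` keeps `mind` and lowers `m` by one; if `m = 0`, then
`mind γ = ℓ(γ) + 1`, `ν` raises `mind` by one, and the new `m` is `ℓ(γ) = mind γ - 1`. This is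
exactly how the staircase steps from one plateau to the next. -/

lemma conj_eq_countP (l : List ℕ) (j : ℕ) : conj l j = l.countP (j < ·) := by
  induction l with
  | nil => rfl
  | cons a t ih =>
    simp only [conj, parts, List.length_cons, List.range_succ_eq_map, List.countP_cons,
      List.countP_map] at ih ⊢
    rw [← ih]
    simp [Function.comp_def, add_comm]

lemma conj_zero_s14 {l : List ℕ} (hl : IsPartition l) : conj l 0 = l.length := by
  rw [conj_eq_countP, List.countP_eq_length]
  simpa using hl.2

lemma conj_le_length (l : List ℕ) (j : ℕ) : conj l j ≤ l.length :=
  conj_eq_countP l j ▸ List.countP_le_length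

lemma parts_mem {l : List ℕ} {i : ℕ} (hi : i < l.length) : parts l i ∈ l := by
  rw [parts, List.getD_eq_getElem l 0 hi]
  exact List.getElem_mem hi

lemma lt_conj_iff_s14 {l : List ℕ} (hl : l.Pairwise (· ≥ ·)) {i j : ℕ} :
    i < conj l j ↔ i < l.length ∧ j < parts l i := by
  rw [conj_eq_countP]
  induction l generalizing i with
  | nil => simp
  | cons a t ih =>
    obtain ⟨ha, ht⟩ := List.pairwise_cons.1 hl
    by_cases hja : j < a
    · cases i with
      | zero => simp [parts, hja]
      | succ i => simpa [List.countP_cons, hja, parts] using ih ht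
    · have hzero : t.countP (j < ·) = 0 := List.countP_eq_zero.2 fun b hb => by
        simpa using (ha b hb).trans (not_lt.1 hja)
      suffices ¬ (i < t.length + 1 ∧ j < parts (a :: t) i) by simpa [List.countP_cons, hzero, hja]
      rintro ⟨hi, hj⟩
      exact hja (hj.trans_le ((List.mem_cons.1 (parts_mem hi)).elim le_of_eq (ha _)))

lemma mind_le_iff (l : List ℕ) (n : ℕ) :
    mind l ≤ n ↔ ∀ i < l.length, parts l i + i + 1 ≤ n := by
  set S := {n : ℕ | ∀ i < l.length, parts l i + i + 1 ≤ n}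
  have hS : S.Nonempty := ⟨l.sum + l.length, fun i hi => by
    have := List.le_sum_of_mem (parts_mem hi)
    omega⟩
  exact ⟨fun h i hi => (Nat.sInf_mem hS i hi).trans h, fun h => Nat.sInf_le h⟩

lemma mind_le_iff_conj {l : List ℕ} (hl : IsPartition l) (n : ℕ) :
    mind l ≤ n ↔ ∀ j, 0 < conj l j → conj l j + j + 1 ≤ n := by
  rw [mind_le_iff]
  constructor
  · intro h j hj
    obtain ⟨hi, hji⟩ := (lt_conj_iff_s14 hl.1).1 (Nat.sub_one_lt_of_lt hj)
    have := h _ hi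
    omega
  · intro h i hi
    have hpos := hl.2 _ (parts_mem hi)
    have hij : i < conj l (parts l i - 1) := (lt_conj_iff_s14 hl.1).2 ⟨hi, by omega⟩
    have := h (parts l i - 1) (by omega)
    omega

lemma conj_add_le_mind {l : List ℕ} (hl : IsPartition l) {j : ℕ} (hj : 0 < conj l j) :
    conj l j + j + 1 ≤ mind l :=
  (mind_le_iff_conj hl _).1 le_rfl j hj

lemma exists_conj_add_eq_mind {l : List ℕ} (hl : IsPartition l) (hm : 0 < mind l) :
    ∃ j, 0 < conj l j ∧ conj l j + j + 1 = mind l := by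
  by_contra! h
  have : mind l ≤ mind l - 1 := (mind_le_iff_conj hl _).2 fun j hj => by
    have := conj_add_le_mind hl hj
    have := h j hj
    omega
  omega

lemma le_headD_of_mem {l : List ℕ} (hl : l.Pairwise (· ≥ ·)) {x : ℕ} (hx : x ∈ l) :
    x ≤ l.headD 0 := by
  cases l with
  | nil => simp at hx
  | cons a t => exact (List.mem_cons.1 hx).elim le_of_eq ((List.pairwise_cons.1 hl).1 x)

lemma isPartition_nu {l : List ℕ} (hl : IsPartition l) (hd : l.headD 0 ≤ l.length + 2) :
    IsPartition (nu l) := by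
  refine ⟨List.Pairwise.sublist List.filter_sublist (List.pairwise_cons.2 ⟨?_, ?_⟩), ?_⟩
  · simp only [List.mem_map, forall_exists_index, and_imp, forall_apply_eq_imp_iff₂]
    intro x hx
    have := le_headD_of_mem hl.1 hx
    omega
  · exact hl.1.map _ fun a b hab => Nat.sub_le_sub_right hab 1
  · intro x hx
    simpa [Nat.pos_iff_ne_zero] using (List.mem_filter.1 hx).2

lemma conj_nu_s14 (l : List ℕ) (j : ℕ) :
    conj (nu l) j = (if j ≤ l.length then 1 else 0) + conj l (j + 1) := by
  have hshift : ((fun a => decide (j < a) && decide (a ≠ 0)) ∘ fun x => x - 1) =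
      fun x => decide (j + 1 < x) := by
    funext x
    simp only [Function.comp_apply, ← Bool.decide_and]
    exact decide_eq_decide.2 (by omega)
  rw [conj_eq_countP, conj_eq_countP, nu, List.countP_filter, List.countP_cons, List.countP_map,
    hshift, add_comm]
  congr 1
  simp only [Bool.and_eq_true, decide_eq_true_eq]
  split_ifs <;> omega

lemma lt_headD_of_conj_pos {l : List ℕ} (hl : l.Pairwise (· ≥ ·)) {j : ℕ} (hj : 0 < conj l j) :
    j < l.headD 0 := by
  obtain ⟨hlen, hj⟩ := (lt_conj_iff_s14 hl).1 hj
  cases l with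
  | nil => simp at hlen
  | cons a t => exact hj

lemma mind_nu_le_iff {l : List ℕ} (hl : IsPartition l) (hd : l.headD 0 ≤ l.length + 2) (n : ℕ) :
    mind (nu l) ≤ n ↔ l.length + 2 ≤ n ∧ mind l ≤ n := by
  simp only [mind_le_iff_conj (isPartition_nu hl hd), mind_le_iff_conj hl, conj_nu_s14]
  constructor
  · intro h
    have hlen := h l.length (by simp)
    refine ⟨by simp at hlen; omega, fun j hj => ?_⟩
    cases j with
    | zero => have := conj_le_length l 0; omega
    | succ k =>
      have hk := lt_headD_of_conj_pos hl.1 hj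
      have := h k (by split_ifs <;> omega)
      split_ifs at this <;> omega
  · rintro ⟨hlen, h⟩ j hj
    by_cases hc : 0 < conj l (j + 1)
    · have := h _ hc
      split_ifs <;> omega
    · split_ifs at hj ⊢ <;> omega

lemma mind_nu {l : List ℕ} (hl : IsPartition l) (hd : l.headD 0 ≤ l.length + 2) :
    mind (nu l) = max (l.length + 2) (mind l) :=
  eq_of_forall_ge_iff fun n => by rw [mind_nu_le_iff hl hd, max_le_iff]

/-- The paper's `m`, with columns indexed from `0`: column `m` is the first one with
`mind l − m − 1` cells. -/
def IsLeastTightColumn (l : List ℕ) (m : ℕ) : Prop :=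
  conj l m + m + 1 = mind l ∧ ∀ k < m, conj l k + k + 1 ≠ mind l

namespace IsLeastTightColumn

variable {l : List ℕ} {m : ℕ}

lemma conj_pos (hl : IsPartition l) (h : IsLeastTightColumn l m) : 0 < conj l m := by
  by_contra! h0
  have := h.1
  obtain ⟨j, hj, hjm⟩ := exists_conj_add_eq_mind hl (by omega)
  exact h.2 j (by omega) hjm

lemma mind_eq_length_add_one (hl : IsPartition l) (h : IsLeastTightColumn l 0) :
    mind l = l.length + 1 := by
  have := h.1
  rw [conj_zero_s14 hl] at this
  omega

lemma nu_of_zero (hl : IsPartition l) (hd : l.headD 0 ≤ l.length + 2)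
    (h : IsLeastTightColumn l 0) :
    mind (nu l) = mind l + 1 ∧ IsLeastTightColumn (nu l) l.length := by
  have hmind := h.mind_eq_length_add_one hl
  have hnu : mind (nu l) = l.length + 2 := by rw [mind_nu hl hd]; omega
  have hbound {j : ℕ} (hj : 0 < conj l j) := conj_add_le_mind hl hj
  refine ⟨by omega, ?_, fun k hk => ?_⟩
  · have : conj l (l.length + 1) = 0 := by
      by_contra! hc
      have := hbound (Nat.pos_of_ne_zero hc)
      omega
    rw [conj_nu_s14, if_pos le_rfl, this, hnu]
    omega
  · rw [conj_nu_s14, if_pos hk.le, hnu]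
    by_cases hc : 0 < conj l (k + 1)
    · have := hbound hc
      omega
    · omega

lemma nu_of_succ (hl : IsPartition l) (hd : l.headD 0 ≤ l.length + 2)
    (h : IsLeastTightColumn l (m + 1)) :
    mind (nu l) = mind l ∧ IsLeastTightColumn (nu l) m := by
  have hpos := h.conj_pos hl
  have hm := lt_headD_of_conj_pos hl.1 hpos
  have hlen : 0 < conj l 0 := conj_zero_s14 hl ▸ hpos.trans_le (conj_le_length l _)
  have hnu : mind (nu l) = mind l := by
    have := conj_add_le_mind hl hlen
    have := h.2 0 (Nat.succ_pos m)
    rw [conj_zero_s14 hl] at *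
    rw [mind_nu hl hd]
    omega
  refine ⟨hnu, ?_, fun k hk => ?_⟩
  · rw [conj_nu_s14, if_pos (by omega), hnu, ← h.1]
    ring
  · rw [conj_nu_s14, if_pos (by omega), hnu]
    have := h.2 (k + 1) (by omega)
    omega

end IsLeastTightColumn

lemma C2_succ (n : ℤ) : C2 (n + 1) = C2 n + n := by
  rw [C2, C2, show (n + 1) * (n + 1 - 1) = n * (n - 1) + n * 2 by ring,
    Int.add_mul_ediv_right _ _ two_ne_zero]

lemma staircase_of_le {a m h i : ℤ} (hi : i ≤ a + m) : staircase a m h i = h :=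
  IsLeast.csInf_eq ⟨⟨le_rfl, by linarith⟩, fun _ hn => hn.1⟩

lemma staircase_of_lt {a m h i : ℤ} (hi : a + m < i) :
    staircase a m h i = staircase (a + m + 1) (h - 1) (h + 1) i := by
  unfold staircase
  congr 1
  ext n
  simp only [Set.mem_ofPred_eq, C2_succ]
  constructor
  · rintro ⟨hn, hin⟩
    obtain rfl | hlt := hn.eq_or_lt
    · linarith
    · exact ⟨hlt, by linarith⟩
  · rintro ⟨hn, hin⟩
    exact ⟨by linarith, by linarith⟩

lemma staircase_add_one_left (a m h i : ℤ) :
    staircase (a + 1) m h i = staircase a (m + 1) h i := by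
  rw [staircase, staircase, add_right_comm, add_assoc a]

theorem mind_nuIter_eq_staircase {l δ : List ℕ} {m i : ℕ} (hl : IsPartition l) (hm : IsLeastTightColumn l m)
    (a : ℤ) (hδ : nuIter i l = some δ) :
    (mind δ : ℤ) = staircase a m (mind l) (a + i) := by
  induction i generalizing l m a with
  | zero =>
    obtain rfl : l = δ := Option.some_injective _ hδ
    exact (staircase_of_le (by simp)).symm
  | succ i ih =>
    rw [nuIter] at hδ
    split_ifs at hδ with hd
    rcases m with _ | m
    · obtain ⟨hmind, hm'⟩ := hm.nu_of_zero hl hd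
      have hlen := hm.mind_eq_length_add_one hl
      rw [ih (isPartition_nu hl hd) hm' (a + 1) hδ, hmind,
        staircase_of_lt (a := a) (by push_cast; omega)]
      congr 1 <;> push_cast <;> omega
    · obtain ⟨hmind, hm'⟩ := hm.nu_of_succ hl hd
      rw [ih (isPartition_nu hl hd) hm' (a + 1) hδ, hmind, staircase_add_one_left]
      push_cast
      ring_nf

theorem stmt14 (γ : List ℕ) (hγ : IsPartition γ) (m : ℕ)
    -- m is the least integer such that the (m+1)-th column of γ has exactly mind(γ) − m − 1 cells
    (hm : (conj γ m : ℤ) = (mind γ : ℤ) - m - 1)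
    (hmleast : ∀ m' < m, (conj γ m' : ℤ) ≠ (mind γ : ℤ) - m' - 1) :
    ∀ (i : ℕ) (δ : List ℕ), nuIter i γ = some δ →
      (mind δ : ℤ) = staircase (dinv γ) m (mind γ) ((dinv γ : ℤ) + i) := by
  intro i δ hδ
  have hcol : IsLeastTightColumn γ m :=
    ⟨by omega, fun k hk => by have := hmleast k hk; omega⟩
  exact mind_nuIter_eq_staircase hγ hcol _ hδ
end
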